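/- Weak coding of definable sets of squarefree tuples (standard-model form): let D ⊆ (ℕ⁺)ⁿ be definable with parameters, and suppose every component of every tuple in D is squarefree. Then there exists a finite set X ⊆ ℕ⁺ such that D is definable over some tuple of elements of X, and every monoid automorphism f of ℕ⁺ whose componentwise action on (ℕ⁺)ⁿ maps D onto D satisfies f(X) = X (setwise). In other words, D has an almost canonical parameter. -/

import Mathlib

open FirstOrder Language

/-- The language `L` with one binary function symbol `·` and one constant symbol `1`. -/
def L : FirstOrder.Language :=
  ⟨fun n => match n with | 0 => Unit | 2 => Unit | _ => Empty, fun _ => Empty⟩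

/-- Any monoid is an `L`-structure, with `·` interpreted as multiplication and `1` as the
identity. In particular `ℕ+` is the standard model of Skolem arithmetic, and
`Multiplicative ℕ` is the additive `L`-structure `(ℕ, +, 0)`. -/
instance (M : Type*) [Monoid M] : L.Structure M where
  funMap {n} f x :=
    match n, f, x with
    | 0, _, _ => 1
    | 2, _, x => x 0 * x 1
  RelMap r _ := r.elim

/-- `r` is squarefree: no square of a prime divides it. -/
def Sqf (r : ℕ+) : Prop := ∀ p : ℕ+, (p : ℕ).Prime → ¬ p * p ∣ r

/-!
Automorphisms of `(ℕ⁺, ·)` are exactly the permutations of the primes. A set `D` defined with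
parameters `c` is therefore *supported*, in the sense of nominal sets, by the finite set of primes
dividing `c`: every permutation fixing those primes fixes `D`. Since there are infinitely many
primes, finite supports are closed under intersection (the primes of one support outside the other
are removed one at a time, by routing them through a fresh prime with transpositions), so `D` has a
least finite support `X`; an automorphism fixing `D` maps `X` onto a support of `D` of the same
size, hence onto `X`. Finally `D` is definable over `X`: a prime `p` of the parameters outside `X`
may be replaced by "some prime `y` outside the remaining parameters", because the transposition of
`y` and `p` fixes the remaining parameters, which support `D`.
-/

open Set

section MonoidLanguage

variable {M N : Type*} [Monoid M] [Monoid N] {α : Type*}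

instance : StrongHomClass L (M ≃* N) M N where
  map_fun f n g x := match n, g with
    | 0, _ => map_one f
    | 2, _ => map_mul f (x 0) (x 1)
  map_rel _ _ r := r.elim

def L.oneTerm : L.Term α := Term.func (l := 0) () ![]

def L.mulTerm (t s : L.Term α) : L.Term α := Term.func (l := 2) () ![t, s]

@[simp] theorem L.realize_oneTerm (v : α → M) : (L.oneTerm : L.Term α).realize v = 1 := rfl

@[simp] theorem L.realize_mulTerm (t s : L.Term α) (v : α → M) :
    (L.mulTerm t s).realize v = t.realize v * s.realize v := rfl

theorem L.exists_term_realize_eq {B : Set M} {a : M} (ha : a ∈ Submonoid.closure B) :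
    ∃ t : L.Term B, t.realize (↑) = a := by
  induction ha using Submonoid.closure_induction with
  | mem x hx => exact ⟨Term.var ⟨x, hx⟩, rfl⟩
  | one => exact ⟨L.oneTerm, rfl⟩
  | mul x y _ _ hx hy =>
    obtain ⟨t, rfl⟩ := hx
    obtain ⟨s, rfl⟩ := hy
    exact ⟨L.mulTerm t s, rfl⟩

theorem Set.Definable.of_subset_closure {A B : Set M} {s : Set (α → M)}
    (hAB : A ⊆ Submonoid.closure B) (h : A.Definable L s) : B.Definable L s := by
  rw [definable_iff_exists_formula_sum] at h ⊢
  obtain ⟨φ, rfl⟩ := h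
  choose t ht using fun a : A => L.exists_term_realize_eq (hAB a.2)
  refine ⟨φ.subst (Sum.elim (fun a => (t a).relabel Sum.inl) (Term.var ∘ Sum.inr)), ?_⟩
  ext v
  simp only [mem_ofPred_eq, Formula.Realize, BoundedFormula.realize_subst]
  congr! with x
  rcases x with a | i <;> simp [Term.realize_relabel, ht]

noncomputable def L.primeFormula : L.Formula Unit :=
  ∼((Term.var ()).equal L.oneTerm) ⊓
    Formula.iAlls (Fin 2)
      (((L.mulTerm (Term.var (Sum.inr 0)) (Term.var (Sum.inr 1))).equal
          (Term.var (Sum.inl ()))).imp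
        ((Term.var (Sum.inr 0)).equal L.oneTerm ⊔ (Term.var (Sum.inr 1)).equal L.oneTerm))

theorem L.realize_primeFormula (x : M) :
    (L.primeFormula : L.Formula Unit).Realize (fun _ => x) ↔
      x ≠ 1 ∧ ∀ a b : M, a * b = x → a = 1 ∨ b = 1 := by
  simp only [primeFormula, Formula.realize_inf, Formula.realize_not, Formula.realize_equal,
    Formula.realize_iAlls, Formula.realize_imp, Formula.realize_sup, L.realize_mulTerm,
    L.realize_oneTerm, Term.realize_var, Sum.elim_inl, Sum.elim_inr]
  exact and_congr Iff.rfl ⟨fun h a b => h ![a, b], fun h i => h (i 0) (i 1)⟩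

end MonoidLanguage

section Definability

variable {L' : FirstOrder.Language} {M : Type*} [L'.Structure M] {α β : Type*}

theorem Set.definable_range_setOf_realize (φ : L'.Formula (α ⊕ β)) (c : β → M) :
    (range c).Definable L' {a | φ.Realize (Sum.elim a c)} := by
  rw [definable_iff_exists_formula_sum]
  refine ⟨φ.relabel (Sum.elim Sum.inr fun j => Sum.inl ⟨c j, j, rfl⟩), ?_⟩
  ext a
  simp only [mem_ofPred_eq, Formula.realize_relabel]
  exact iff_of_eq (congrArg φ.Realize (funext fun x => by rcases x with i | j <;> rfl))

theorem Set.Definable.exists_formula_fin {A : Finset M} {s : Set (α → M)}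
    (h : (A : Set M).Definable L' s) :
    ∃ (k : ℕ) (t : Fin k → M) (φ : L'.Formula (α ⊕ Fin k)),
      (∀ i, t i ∈ A) ∧ s = {a | φ.Realize (Sum.elim a t)} := by
  rw [definable_iff_exists_formula_sum] at h
  obtain ⟨φ, rfl⟩ := h
  refine ⟨A.card, fun i => A.equivFin.symm i,
    φ.relabel (Sum.elim (Sum.inr ∘ A.equivFin) Sum.inl), fun i => (A.equivFin.symm i).2, ?_⟩
  ext a
  simp only [mem_ofPred_eq, Formula.realize_relabel]
  exact iff_of_eq (congrArg φ.Realize (funext fun x => by rcases x with x | i <;> simp))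

theorem Set.Definable.comp_mem_iff {F : Type*} [EquivLike F M M] [StrongHomClass L' F M M]
    {A : Set M} {s : Set (α → M)} (h : A.Definable L' s) (g : F) (hg : ∀ a ∈ A, g a = a)
    (v : α → M) : g ∘ v ∈ s ↔ v ∈ s := by
  rw [definable_iff_exists_formula_sum] at h
  obtain ⟨φ, rfl⟩ := h
  have : Sum.elim (↑) (g ∘ v) = g ∘ Sum.elim ((↑) : A → M) v := by
    ext (a | i)
    · exact (hg a a.2).symm
    · rfl
  simp only [mem_ofPred_eq, this, StrongHomClass.realize_formula]

theorem Set.Definable.exists_fiber_of_insert {A : Set M} {b : M} {s : Set (α → M)}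
    (h : (insert b A).Definable L' s) :
    ∃ F : Set (α ⊕ Unit → M), A.Definable L' F ∧
      s = {v | Sum.elim v (fun _ => b) ∈ F} := by
  classical
  rw [definable_iff_exists_formula_sum] at h
  obtain ⟨φ, rfl⟩ := h
  let g : ↥(insert b A) ⊕ α → ↥A ⊕ (α ⊕ Unit) :=
    Sum.elim (fun a => if ha : (a : M) ∈ A then Sum.inl ⟨a, ha⟩ else Sum.inr (Sum.inr ()))
      (Sum.inr ∘ Sum.inl)
  refine ⟨{w | φ.Realize (Sum.elim (↑) w ∘ g)}, ?_, ?_⟩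
  · rw [definable_iff_exists_formula_sum]
    exact ⟨φ.relabel g, by ext; simp [Formula.realize_relabel]⟩
  · ext v
    simp only [mem_ofPred_eq]
    refine iff_of_eq (congrArg φ.Realize (funext fun x => ?_))
    rcases x with ⟨a, ha⟩ | i
    · by_cases haA : a ∈ A
      · simp [g, haA]
      · obtain rfl := (mem_insert_iff.1 ha).resolve_right haA
        simp [g, haA]
    · rfl

theorem Set.definable_setOf_notMem (A : Set M) [Finite A] (i : α) :
    A.Definable L' {w | w i ∉ A} := by
  rw [definable_iff_exists_formula_sum]
  refine ⟨Formula.iInf fun a : A => ∼((Term.var (Sum.inr i)).equal (Term.var (Sum.inl a))),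
    ?_⟩
  ext w
  simpa using ⟨fun h a ha hw => h (hw ▸ ha), fun h hw => h _ hw rfl⟩

end Definability

open scoped Pointwise

namespace MulAction

theorem Supports.smul_of_group {G α β : Type*} [Group G] [MulAction G α] [MulAction G β]
    {s : Set α} {b : β} (g : G) (h : Supports G s b) : Supports G (g • s) (g • b) := by
  intro g' hg'
  have : (g⁻¹ * g' * g) • b = b := h _ fun a ha => by
    simp [mul_smul, hg' (smul_mem_smul_set ha)]
  rwa [mul_smul, mul_smul, inv_smul_eq_iff] at this

open Equiv

variable {α β : Type*} [MulAction (Perm α) β] {x : β}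

theorem Supports.smul_eq_smul {s : Set α} (h : Supports (Perm α) s x) {σ τ : Perm α}
    (hστ : ∀ a ∈ s, σ a = τ a) : σ • x = τ • x := by
  have : (τ⁻¹ * σ) • x = x := h _ fun a ha => by simp [Perm.mul_apply, hστ a ha]
  rwa [mul_smul, inv_smul_eq_iff] at this

theorem Supports.swap_smul [DecidableEq α] {s : Set α} (h : Supports (Perm α) s x) {a b : α}
    (ha : a ∉ s) (hb : b ∉ s) : swap a b • x = x :=
  h _ fun _ hc => swap_apply_of_ne_of_ne (ne_of_mem_of_not_mem hc ha) (ne_of_mem_of_not_mem hc hb)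

theorem Supports.erase [DecidableEq α] [Infinite α] {Y Z : Finset α}
    (hY : Supports (Perm α) (Y : Set α) x) (hZ : Supports (Perm α) (Z : Set α) x) {a : α}
    (ha : a ∉ Z) : Supports (Perm α) (Y.erase a : Set α) x := by
  intro σ hσ
  have hσY : ∀ y ∈ Y, y ≠ a → σ y = y := fun y hy hya =>
    hσ (Finset.mem_erase.2 ⟨hya, hy⟩)
  by_cases hσa : σ a = a
  · exact hY σ fun y hy => if hya : y = a then hya ▸ hσa else hσY y hy hya
  set b := σ a
  have hb : b ∉ Y := fun hbY => hσa (σ.injective (hσY b hbY hσa))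
  obtain ⟨c, hc⟩ := Infinite.exists_notMem_finset (insert a (insert b (Y ∪ Z)))
  simp only [Finset.mem_insert, Finset.mem_union, not_or] at hc
  obtain ⟨hca, hcb, hcY, hcZ⟩ := hc
  -- `σ` agrees on `Y` with the product of the two swaps, which route `a` to `b` through `c`
  calc σ • x = (swap b c * swap a c) • x := hY.smul_eq_smul fun y hy => by
          by_cases hya : y = a
          · simp [hya, b]
          · have hyc : y ≠ c := fun h => hcY (h ▸ hy)
            have hyb : y ≠ b := fun h => hb (h ▸ hy)
            simp [hσY y hy hya, swap_apply_of_ne_of_ne hya hyc, swap_apply_of_ne_of_ne hyb hyc]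
    _ = x := by
      rw [mul_smul, hZ.swap_smul ha (by simpa using hcZ), hY.swap_smul hb (by simpa using hcY)]

theorem Supports.inter [DecidableEq α] [Infinite α] {Y Z : Finset α}
    (hY : Supports (Perm α) (Y : Set α) x) (hZ : Supports (Perm α) (Z : Set α) x) :
    Supports (Perm α) ((Y ∩ Z : Finset α) : Set α) x := by
  have key : ∀ R : Finset α, Disjoint R Z →
      Supports (Perm α) ((Y \ R : Finset α) : Set α) x := by
    intro R
    induction R using Finset.induction_on with
    | empty => simpa using hY
    | insert a R _ ih =>
      intro hRZ
      rw [Finset.sdiff_insert]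
      exact (ih (Finset.disjoint_of_subset_left (Finset.subset_insert a R) hRZ)).erase hZ
        (Finset.disjoint_left.1 hRZ (Finset.mem_insert_self a R))
  simpa [Finset.sdiff_sdiff_self_left] using key (Y \ Z) Finset.sdiff_disjoint

theorem exists_isLeast_supports [Infinite α] {Y : Finset α}
    (h : Supports (Perm α) (Y : Set α) x) :
    ∃ X, IsLeast {Z : Finset α | Supports (Perm α) (Z : Set α) x} X := by
  classical
  obtain ⟨X, hX, hmin⟩ := Finset.exists_min_image
    (Y.powerset.filter fun Z : Finset α => Supports (Perm α) (Z : Set α) x) Finset.card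
    ⟨Y, Finset.mem_filter.2 ⟨Finset.mem_powerset_self Y, h⟩⟩
  obtain ⟨hXY, hX⟩ := Finset.mem_filter.1 hX
  refine ⟨X, hX, fun Z hZ => ?_⟩
  have hcard := hmin (X ∩ Z) (Finset.mem_filter.2
    ⟨Finset.mem_powerset.2 (Finset.inter_subset_left.trans (Finset.mem_powerset.1 hXY)),
      hX.inter hZ⟩)
  exact Finset.inter_eq_left.1 (Finset.eq_of_subset_of_card_le Finset.inter_subset_left hcard)

theorem image_eq_of_isLeast_supports [DecidableEq α] {X : Finset α}
    (hX : IsLeast {Z : Finset α | Supports (Perm α) (Z : Set α) x} X) {σ : Perm α}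
    (hσ : σ • x = x) : X.image σ = X := by
  have hsub : X ⊆ X.image σ := hX.2 (by
    simpa [Finset.coe_image, ← Set.image_smul, hσ] using hX.1.smul_of_group σ)
  exact (Finset.eq_of_subset_of_card_le hsub Finset.card_image_le).symm

end MulAction

namespace PNat

open Equiv

theorem prime_iff_forall_mul_eq (p : ℕ+) :
    p.Prime ↔ p ≠ 1 ∧ ∀ a b : ℕ+, a * b = p → a = 1 ∨ b = 1 := by
  rw [PNat.Prime, Nat.prime_def]
  constructor
  · rintro ⟨hp2, hp⟩
    refine ⟨fun h => by simp [h] at hp2, fun a b hab => ?_⟩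
    rcases hp a ⟨b, by rw [← hab, PNat.mul_coe]⟩ with ha | ha
    · exact Or.inl (PNat.coe_eq_one_iff.1 ha)
    · refine Or.inr (PNat.coe_eq_one_iff.1 ?_)
      have : (a : ℕ) * b = a * 1 := by rw [mul_one, ← PNat.mul_coe, hab, ha]
      exact Nat.eq_of_mul_eq_mul_left a.pos this
  · rintro ⟨hp1, hp⟩
    refine ⟨?_, fun m ⟨k, hk⟩ => ?_⟩
    · have := p.pos
      have : (p : ℕ) ≠ 1 := fun h => hp1 (PNat.coe_eq_one_iff.1 h)
      omega
    · have hm : 0 < m := Nat.pos_of_mul_pos_right (hk ▸ p.pos)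
      have hk' : 0 < k := Nat.pos_of_mul_pos_left (hk ▸ p.pos)
      rcases hp ⟨m, hm⟩ ⟨k, hk'⟩ (PNat.eq hk.symm) with h | h
      · exact Or.inl (congrArg PNat.val h)
      · exact Or.inr (by rw [hk, show k = 1 from congrArg PNat.val h, mul_one])

theorem prime_mulEquiv_apply_iff (f : ℕ+ ≃* ℕ+) (p : ℕ+) : (f p).Prime ↔ p.Prime := by
  simp only [prime_iff_forall_mul_eq, ← L.realize_primeFormula]
  exact StrongHomClass.realize_formula f L.primeFormula (v := fun _ => p)

theorem mem_closure_of_forall_dvd {m : ℕ+} {S : Set Nat.Primes}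
    (h : ∀ p : Nat.Primes, (p : ℕ+) ∣ m → p ∈ S) :
    m ∈ Submonoid.closure (Nat.Primes.toPNat '' S) := by
  rw [← prod_factorMultiset m]
  refine Submonoid.multiset_prod_mem _ _ fun x hx => ?_
  obtain ⟨hx, hxm⟩ := mem_factorMultiset.1 hx
  exact Submonoid.subset_closure ⟨⟨x, hx⟩, h _ hxm, rfl⟩

theorem monoidHom_ext_primes {M : Type*} [CommMonoid M] {f g : ℕ+ →* M}
    (h : ∀ p : Nat.Primes, f p = g p) : f = g := by
  ext n
  rw [← prod_factorMultiset n, PrimeMultiset.prod, map_multiset_prod, map_multiset_prod]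
  refine congrArg _ (Multiset.map_congr rfl fun x hx => ?_)
  exact h ⟨x, (mem_factorMultiset.1 hx).1⟩

-- `erw`: `PrimeMultiset` is a plain `def` for `Multiset Nat.Primes`, so `Multiset` lemmas
-- only match up to unfolding it.
noncomputable def mulAutOfPerm (σ : Perm Nat.Primes) : MulAut ℕ+ where
  toFun n := PrimeMultiset.prod (n.factorMultiset.map σ)
  invFun n := PrimeMultiset.prod (n.factorMultiset.map σ.symm)
  left_inv n := by
    dsimp only
    rw [PrimeMultiset.factorMultiset_prod (n.factorMultiset.map σ)]
    erw [Multiset.map_map, symm_comp_self, Multiset.map_id]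
    exact prod_factorMultiset n
  right_inv n := by
    dsimp only
    rw [PrimeMultiset.factorMultiset_prod (n.factorMultiset.map σ.symm)]
    erw [Multiset.map_map, self_comp_symm, Multiset.map_id]
    exact prod_factorMultiset n
  map_mul' m n := by
    simp only [factorMultiset_mul]
    exact (congrArg _ (Multiset.map_add _ _ _)).trans (PrimeMultiset.prod_add _ _)

theorem mulAutOfPerm_coe (σ : Perm Nat.Primes) (p : Nat.Primes) : mulAutOfPerm σ p = σ p := by
  simp only [mulAutOfPerm, MulEquiv.coe_mk, Equiv.coe_fn_mk, factorMultiset_ofPrime]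
  exact PrimeMultiset.prod_ofPrime (σ p)

def permOfMulEquiv (f : ℕ+ ≃* ℕ+) : Perm Nat.Primes where
  toFun p := ⟨f p, (prime_mulEquiv_apply_iff f p).2 p.2⟩
  invFun p := ⟨f.symm p, (prime_mulEquiv_apply_iff f.symm p).2 p.2⟩
  left_inv p := Nat.Primes.coe_pnat_injective (f.symm_apply_apply p)
  right_inv p := Nat.Primes.coe_pnat_injective (f.apply_symm_apply p)

noncomputable def permPrimesMulEquiv : Perm Nat.Primes ≃* MulAut ℕ+ where
  toFun := mulAutOfPerm
  invFun := permOfMulEquiv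
  left_inv σ := Equiv.ext fun p => Nat.Primes.coe_pnat_injective (mulAutOfPerm_coe σ p)
  right_inv f := MulEquiv.toMonoidHom_injective <| monoidHom_ext_primes fun p =>
    mulAutOfPerm_coe _ p
  map_mul' σ τ := MulEquiv.toMonoidHom_injective <| monoidHom_ext_primes fun p => by
    simp [mulAutOfPerm_coe]

@[simp] theorem permPrimesMulEquiv_coe (σ : Perm Nat.Primes) (p : Nat.Primes) :
    permPrimesMulEquiv σ p = σ p :=
  mulAutOfPerm_coe σ p

end PNat

noncomputable instance : MulAction (Equiv.Perm Nat.Primes) ℕ+ :=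
  MulAction.compHom ℕ+ PNat.permPrimesMulEquiv.toMonoidHom

section SkolemArithmetic

open MulAction Equiv

variable {α : Type*} {n : ℕ} {D : Set (Fin n → ℕ+)}

theorem Set.definable_setOf_prime (A : Set ℕ+) (i : α) :
    A.Definable L {w : α → ℕ+ | (w i).Prime} := by
  rw [definable_iff_exists_formula_sum]
  refine ⟨L.primeFormula.relabel fun _ => Sum.inr i, ?_⟩
  ext w
  simp only [mem_ofPred_eq, Formula.realize_relabel, PNat.prime_iff_forall_mul_eq]
  exact (L.realize_primeFormula (w i)).symm

theorem Set.Definable.exists_finset_primes {A : Set ℕ+} (hA : A.Finite) {s : Set (α → ℕ+)}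
    (h : A.Definable L s) : ∃ S : Finset Nat.Primes, (Nat.Primes.toPNat '' S).Definable L s := by
  refine ⟨hA.toFinset.biUnion fun m => (m : ℕ).primeFactors.subtype Nat.Prime,
    h.of_subset_closure fun m hm => PNat.mem_closure_of_forall_dvd fun p hp => ?_⟩
  exact Finset.mem_biUnion.2 ⟨m, hA.mem_toFinset.2 hm,
    Finset.mem_subtype.2 (Nat.mem_primeFactors.2 ⟨p.2, PNat.dvd_iff.1 hp, m.ne_zero⟩)⟩

theorem supports_of_definable {T : Finset Nat.Primes}
    (hD : (Nat.Primes.toPNat '' T).Definable L D) :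
    Supports (Perm Nat.Primes) (T : Set Nat.Primes) D := by
  intro σ hσ
  have hfix : ∀ a ∈ Nat.Primes.toPNat '' T, PNat.permPrimesMulEquiv σ⁻¹ a = a := by
    rintro _ ⟨p, hp, rfl⟩
    rw [PNat.permPrimesMulEquiv_coe, Perm.inv_eq_iff_eq.2 (hσ hp).symm]
  ext a
  rw [Set.mem_smul_set_iff_inv_smul_mem]
  exact hD.comp_mem_iff _ hfix a

theorem definable_of_definable_insert {T : Finset Nat.Primes} {p : Nat.Primes} (hp : p ∉ T)
    (hT : Supports (Perm Nat.Primes) (T : Set Nat.Primes) D)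
    (hD : (Nat.Primes.toPNat '' ↑(insert p T)).Definable L D) :
    (Nat.Primes.toPNat '' T).Definable L D := by
  rw [Finset.coe_insert, Set.image_insert_eq] at hD
  obtain ⟨F, hF, rfl⟩ := hD.exists_fiber_of_insert
  have hpT : (p : ℕ+) ∉ Nat.Primes.toPNat '' T :=
    Nat.Primes.coe_pnat_injective.mem_set_image.not.2 hp
  convert ((hF.inter (Set.definable_setOf_prime _ (Sum.inr ()))).inter
    (Set.definable_setOf_notMem _ (Sum.inr ()))).exists_of_finite using 1
  ext a
  simp only [mem_ofPred_eq, mem_inter_iff]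
  constructor
  · exact fun ha => ⟨fun _ => p, ⟨ha, p.2⟩, hpT⟩
  · rintro ⟨u, ⟨hu, hprime⟩, hnot⟩
    let q : Nat.Primes := ⟨u (), hprime⟩
    have hqT : q ∉ T := fun h => hnot ⟨q, h, rfl⟩
    have hfix : ∀ x ∈ Nat.Primes.toPNat '' T, PNat.permPrimesMulEquiv (swap q p) x = x := by
      rintro _ ⟨t, ht, rfl⟩
      rw [PNat.permPrimesMulEquiv_coe, swap_apply_of_ne_of_ne (ne_of_mem_of_not_mem ht hqT)
        (ne_of_mem_of_not_mem ht hp)]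
    have hswap : swap q p • a ∈ {v | Sum.elim v (fun _ => (p : ℕ+)) ∈ F} := by
      show Sum.elim (swap q p • a) (fun _ => (p : ℕ+)) ∈ F
      convert (hF.comp_mem_iff _ hfix _).2 hu using 1
      funext x
      rcases x with i | _
      · rfl
      · exact ((PNat.permPrimesMulEquiv_coe (swap q p) q).trans (by simp)).symm
    rwa [← hT.swap_smul hqT hp, Set.smul_mem_smul_set_iff] at hswap

theorem definable_of_supports {X S : Finset Nat.Primes} (hXS : X ⊆ S)
    (hX : Supports (Perm Nat.Primes) (X : Set Nat.Primes) D)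
    (hS : (Nat.Primes.toPNat '' S).Definable L D) :
    (Nat.Primes.toPNat '' X).Definable L D := by
  suffices ∀ R : Finset Nat.Primes, (Nat.Primes.toPNat '' ↑(X ∪ R)).Definable L D →
      (Nat.Primes.toPNat '' X).Definable L D from
    this S (by rwa [Finset.union_eq_right.2 hXS])
  intro R
  induction R using Finset.induction_on with
  | empty => simp
  | insert p R _ ih =>
    intro h
    rw [Finset.union_insert] at h
    by_cases hp : p ∈ X ∪ R
    · exact ih (by rwa [Finset.insert_eq_of_mem hp] at h)
    · exact ih (definable_of_definable_insert hp (hX.mono (by simp)) h)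

end SkolemArithmetic

theorem definable_radical_set_weak_code_general (n : ℕ) (D : Set (Fin n → ℕ+))
    (hdef : ∃ (k : ℕ) (φ : L.Formula (Fin n ⊕ Fin k)) (c : Fin k → ℕ+),
      D = {a | φ.Realize (Sum.elim a c)}) :
    ∃ X : Finset ℕ+,
      (∃ (k : ℕ) (t : Fin k → ℕ+) (φ : L.Formula (Fin n ⊕ Fin k)),
        (∀ i, t i ∈ X) ∧ D = {a | φ.Realize (Sum.elim a t)}) ∧
      ∀ f : ℕ+ ≃* ℕ+, (fun a : Fin n → ℕ+ => fun i => f (a i)) '' D = D →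
        X.image (f : ℕ+ → ℕ+) = X := by
  obtain ⟨k, φ, c, hD⟩ := hdef
  obtain ⟨S, hS⟩ := (hD ▸ Set.definable_range_setOf_realize φ c).exists_finset_primes
    (Set.finite_range c)
  obtain ⟨X, hX⟩ := MulAction.exists_isLeast_supports (supports_of_definable hS)
  have hXdef : ((X.image Nat.Primes.toPNat : Finset ℕ+) : Set ℕ+).Definable L D := by
    rw [Finset.coe_image]
    exact definable_of_supports (hX.2 (supports_of_definable hS)) hX.1 hS
  refine ⟨X.image Nat.Primes.toPNat, hXdef.exists_formula_fin, fun f hf => ?_⟩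
  obtain ⟨σ, rfl⟩ := PNat.permPrimesMulEquiv.surjective f
  have hσ : σ • D = D := hf
  conv_rhs => rw [← MulAction.image_eq_of_isLeast_supports hX hσ]
  simp only [Finset.image_image]
  exact Finset.image_congr fun p _ => PNat.permPrimesMulEquiv_coe σ p

/-- Every definable set of squarefree tuples has an almost canonical parameter: a finite
set `X` over (a tuple from) which `D` is definable and which is fixed setwise by every
monoid automorphism of `ℕ⁺` fixing `D` setwise. -/
theorem definable_radical_set_weak_code (n : ℕ) (D : Set (Fin n → ℕ+))
    (hdef : ∃ (k : ℕ) (φ : L.Formula (Fin n ⊕ Fin k)) (c : Fin k → ℕ+),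
      D = {a | φ.Realize (Sum.elim a c)})
    (hsq : ∀ d ∈ D, ∀ i, Sqf (d i)) :
    ∃ X : Finset ℕ+,
      (∃ (k : ℕ) (t : Fin k → ℕ+) (φ : L.Formula (Fin n ⊕ Fin k)),
        (∀ i, t i ∈ X) ∧ D = {a | φ.Realize (Sum.elim a t)}) ∧
      ∀ f : ℕ+ ≃* ℕ+, (fun a : Fin n → ℕ+ => fun i => f (a i)) '' D = D →
        X.image (f : ℕ+ → ℕ+) = X :=
  definable_radical_set_weak_code_general n D hdef
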